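/- arXiv:1608.02224 — 3 statements merged into one kernel-verified Lean document; each statement's English description precedes it below -/
import Mathlib

section
/- Let λ > 0, let α ∈ (0,1), and let k ≥ 1 be an integer. Then ∫_0^∞ e^{−λ s} ((λ s)^k / k!) · (α s^{−α−1} / Γ(1−α)) ds = α λ^α Γ(k−α) / (Γ(1−α) · k!), where Γ denotes the real Gamma function. -/
open MeasureTheory

theorem stmt_1 (lam α : ℝ) (hlam : 0 < lam) (hα : α ∈ Set.Ioo (0 : ℝ) 1)
    (k : ℕ) (hk : 1 ≤ k) :
    ∫ s in Set.Ioi (0 : ℝ),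
        Real.exp (-lam * s) * ((lam * s) ^ k / (k.factorial : ℝ)) *
          (α * s ^ (-α - 1) / Real.Gamma (1 - α))
      = α * lam ^ α * Real.Gamma ((k : ℝ) - α) / (Real.Gamma (1 - α) * (k.factorial : ℝ)) := by
  obtain ⟨hα0, hα1⟩ := hα
  have ha : 0 < (k : ℝ) - α := by
    have : (1 : ℝ) ≤ k := by exact_mod_cast hk
    linarith
  have key := Real.integral_rpow_mul_exp_neg_mul_Ioi (a := (k : ℝ) - α) (r := lam) ha hlam
  have hC : ∀ s ∈ Set.Ioi (0 : ℝ),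
      Real.exp (-lam * s) * ((lam * s) ^ k / (k.factorial : ℝ)) *
        (α * s ^ (-α - 1) / Real.Gamma (1 - α))
      = (lam ^ k * α / (Real.Gamma (1 - α) * (k.factorial : ℝ))) *
        (s ^ ((k : ℝ) - α - 1) * Real.exp (-(lam * s))) := by
    intro s hs
    have hs0 : (0 : ℝ) < s := hs
    have h1 : s ^ ((k : ℝ) - α - 1) = s ^ k * s ^ (-α - 1) := by
      rw [← Real.rpow_natCast s k, ← Real.rpow_add hs0]
      ring_nf
    have hΓ : Real.Gamma (1 - α) ≠ 0 := (Real.Gamma_pos_of_pos (by linarith)).ne'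
    have hfac : (k.factorial : ℝ) ≠ 0 := Nat.cast_ne_zero.mpr k.factorial_ne_zero
    rw [h1, mul_pow, neg_mul, ← neg_mul]
    field_simp
  rw [setIntegral_congr_fun measurableSet_Ioi hC, integral_const_mul, key]
  have hpow : lam ^ ((k : ℕ) : ℝ) * (1 / lam) ^ ((k : ℝ) - α) = lam ^ α := by
    rw [one_div, Real.inv_rpow hlam.le, ← Real.rpow_neg hlam.le, ← Real.rpow_add hlam]
    ring_nf
  rw [← Real.rpow_natCast lam k,
    show lam ^ α = lam ^ ((k : ℕ) : ℝ) * (1 / lam) ^ ((k : ℝ) - α) from hpow.symm]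
  ring
end

section
/- Let α : [0,∞) → (0,1) be continuous, let λ > 0, let τ ≥ 0, t > 0, and let u ∈ [0,1). Then exp(−∫_τ^{τ+t} λ^{α(s)} (1−u)^{α(s)} ds) = exp(−∫_τ^{τ+t} λ^{α(s)} ds) + ∑_{n=1}^∞ u^n [ ∑_{r=1}^∞ ((−1)^{n+r}/r!) ∫_{[τ,τ+t]^r} λ^{β_r(s₁,…,s_r)} binom(β_r(s₁,…,s_r), n) ds₁⋯ds_r ], where the inner integrals are over the r-dimensional cube [τ,τ+t]^r with Lebesgue measure. -/
/-!
Expanding `exp (-J)` with `J = ∫_T λ^α (1-u)^α` as `∑_r (-J)^r / r!`, Fubini turns `J^r` into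
`∫_{T^r} λ^β (1-u)^β`, and the binomial series `(1-u)^β = ∑_n binom(β,n) (-u)^n` is integrated
term by term. The resulting double series over `(r, n)` is absolutely summable: as `|β| ≤ r`,
`|binom(β,n)| ≤ (-1)^n binom(-r,n)`, whose sum over `n` is `(1-|u|)^(-r)`, so the absolute values
are dominated by the expansion of `exp (∫_T λ^α / (1-|u|))`. Summing first over `r` instead, the
row `n = 0` gives `exp (-∫_T λ^α)`, and the column `r = 0` vanishes for `n ≥ 1`.
-/

open MeasureTheory

/-- Generalized binomial coefficient `binom(x, n) = (∏_{j=0}^{n-1} (x - j)) / n!`. -/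
noncomputable def gbinom (x : ℝ) (n : ℕ) : ℝ :=
  (∏ j ∈ Finset.range n, (x - (j : ℝ))) / (n.factorial : ℝ)

/-- `β_r(s₁, …, s_r) = ∑_{j=1}^r α(s_j)`. -/
noncomputable def betaSum (α : ℝ → ℝ) {r : ℕ} (s : Fin r → ℝ) : ℝ :=
  ∑ j, α (s j)

lemma gbinom_zero_right (x : ℝ) : gbinom x 0 = 1 := by
  simp [gbinom]

lemma gbinom_zero_succ (n : ℕ) : gbinom 0 (n + 1) = 0 := by
  simp [gbinom, Finset.prod_range_succ']

lemma gbinom_eq_choose (x : ℝ) (n : ℕ) : gbinom x n = Ring.choose x n := by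
  rw [Ring.choose_eq_smul, ← Polynomial.aeval_eq_smeval, Polynomial.aeval_def,
    Polynomial.eval₂_eq_eval_map, descPochhammer_map, descPochhammer_eval_eq_prod_range, gbinom,
    smul_eq_mul, div_eq_inv_mul]

theorem hasSum_gbinom_mul_pow (a : ℝ) {x : ℝ} (hx : |x| < 1) :
    HasSum (fun n => gbinom a n * x ^ n) ((1 + x) ^ a) := by
  have h := Real.one_add_rpow_hasFPowerSeriesOnBall_zero (a := a)
  have hx' : x ∈ Metric.eball 0 1 := by
    rwa [mem_eball_zero_iff, ← ofReal_norm, ENNReal.ofReal_lt_one, Real.norm_eq_abs]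
  simpa [binomialSeries, FormalMultilinearSeries.ofScalars, gbinom_eq_choose] using h.hasSum hx'

lemma abs_gbinom_le {y M : ℝ} (hy : |y| ≤ M) (n : ℕ) :
    |gbinom y n| ≤ (-1) ^ n * gbinom (-M) n := by
  have hM : (-1 : ℝ) ^ n * gbinom (-M) n = (∏ j ∈ Finset.range n, (j + M)) / n.factorial := by
    simp_rw [gbinom, mul_div_assoc', neg_sub_left, Finset.prod_neg, Finset.card_range,
      ← mul_assoc, ← mul_pow]
    norm_num
  rw [hM, gbinom, abs_div, Finset.abs_prod, Nat.abs_cast]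
  gcongr with j
  calc |y - j| ≤ |y| + |(j : ℝ)| := abs_sub _ _
    _ ≤ j + M := by rw [Nat.abs_cast]; linarith

lemma continuous_gbinom (n : ℕ) : Continuous (gbinom · n) := by
  unfold gbinom; fun_prop

lemma hasSum_neg_one_pow_mul_gbinom_neg_mul_abs_pow (M : ℝ) {c : ℝ} (hc : |c| < 1) :
    HasSum (fun n => (-1) ^ n * gbinom (-M) n * |c| ^ n) ((1 - |c|) ^ (-M)) := by
  have h := hasSum_gbinom_mul_pow (-M) (x := -|c|) (by rwa [abs_neg, abs_abs])
  simp_rw [neg_pow (|c|), ← sub_eq_add_neg] at h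
  convert h using 2
  ring

lemma abs_mul_gbinom_mul_pow_le {y M : ℝ} (w c : ℝ) (hy : |y| ≤ M) (n : ℕ) :
    |w * gbinom y n * c ^ n| ≤ |w| * ((-1) ^ n * gbinom (-M) n * |c| ^ n) := by
  calc |w * gbinom y n * c ^ n| = |w| * |gbinom y n| * |c| ^ n := by
        rw [abs_mul, abs_mul, abs_pow]
    _ ≤ |w| * ((-1) ^ n * gbinom (-M) n) * |c| ^ n := by gcongr; exact abs_gbinom_le hy n
    _ = |w| * ((-1) ^ n * gbinom (-M) n * |c| ^ n) := by ring

section Dominated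

variable {Y : Type*} [MeasurableSpace Y] {ν : Measure Y} {w b : Y → ℝ} {M c : ℝ}

theorem hasSum_integral_mul_gbinom_mul_pow (hw : Integrable w ν) (hb : AEStronglyMeasurable b ν)
    (hbM : ∀ᵐ y ∂ν, |b y| ≤ M) (hc : |c| < 1) :
    HasSum (fun n => ∫ y, w y * gbinom (b y) n * c ^ n ∂ν) (∫ y, w y * (1 + c) ^ b y ∂ν) := by
  have hM := hasSum_neg_one_pow_mul_gbinom_neg_mul_abs_pow M hc
  refine hasSum_integral_of_dominated_convergence
    (fun n y => |w y| * ((-1) ^ n * gbinom (-M) n * |c| ^ n))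
    (fun n => (hw.1.mul ((continuous_gbinom n).comp_aestronglyMeasurable hb)).mul_const _)
    (fun n => hbM.mono fun y hy => abs_mul_gbinom_mul_pow_le _ _ hy n)
    (ae_of_all _ fun y => (hM.mul_left _).summable) ?_
    (ae_of_all _ fun y => ?_)
  · simp_rw [(hM.mul_left _).tsum_eq]
    exact hw.abs.mul_const _
  · simpa only [mul_assoc] using (hasSum_gbinom_mul_pow (b y) hc).mul_left (w y)

lemma abs_integral_mul_gbinom_mul_pow_le (hw : Integrable w ν) (hbM : ∀ᵐ y ∂ν, |b y| ≤ M)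
    (n : ℕ) : |∫ y, w y * gbinom (b y) n * c ^ n ∂ν|
      ≤ (∫ y, |w y| ∂ν) * ((-1) ^ n * gbinom (-M) n * |c| ^ n) := by
  rw [← integral_mul_const, ← Real.norm_eq_abs]
  exact norm_integral_le_of_norm_le (hw.abs.mul_const _)
    (hbM.mono fun y hy => abs_mul_gbinom_mul_pow_le (w y) c hy n)

end Dominated

section Cube

variable {μ : Measure ℝ} [SigmaFinite μ] {α : ℝ → ℝ} {r : ℕ} {a : ℝ}

lemma rpow_betaSum (ha : 0 < a) (s : Fin r → ℝ) : a ^ betaSum α s = ∏ i, a ^ α (s i) :=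
  Real.rpow_sum_of_pos ha _ _

lemma integral_rpow_betaSum (ha : 0 < a) :
    ∫ s, a ^ betaSum α s ∂Measure.pi (fun _ : Fin r => μ) = (∫ x, a ^ α x ∂μ) ^ r := by
  simp_rw [rpow_betaSum ha]
  rw [integral_fintype_prod_eq_pow (ι := Fin r) (fun x => a ^ α x) (μ := μ), Fintype.card_fin]

lemma integrable_rpow_betaSum (ha : 0 < a) (h : Integrable (fun x => a ^ α x) μ) :
    Integrable (fun s => a ^ betaSum α s) (Measure.pi fun _ : Fin r => μ) := by
  simp_rw [rpow_betaSum ha]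
  exact Integrable.fintype_prod fun _ => h

lemma aestronglyMeasurable_betaSum (h : AEStronglyMeasurable α μ) :
    AEStronglyMeasurable (betaSum α) (Measure.pi fun _ : Fin r => μ) := by
  unfold betaSum
  exact Finset.aestronglyMeasurable_fun_sum _ fun i _ =>
    h.comp_quasiMeasurePreserving (Measure.quasiMeasurePreserving_eval _ i)

lemma ae_abs_betaSum_le {M : ℝ} (h : ∀ᵐ x ∂μ, |α x| ≤ M) :
    ∀ᵐ s ∂Measure.pi (fun _ : Fin r => μ), |betaSum α s| ≤ r * M := by
  have hs : ∀ᵐ s ∂Measure.pi (fun _ : Fin r => μ), ∀ i, |α (s i)| ≤ M :=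
    ae_all_iff.2 fun i =>
      (Measure.tendsto_eval_ae_ae (μ := fun _ : Fin r => μ) (i := i)).eventually h
  filter_upwards [hs] with s hs
  calc |betaSum α s| ≤ ∑ i, |α (s i)| := Finset.abs_sum_le_sum_abs _ _
    _ ≤ ∑ _i : Fin r, M := Finset.sum_le_sum fun i _ => hs i
    _ = r * M := by simp

end Cube

-- The `(r, n)` term of the double series: `(-J)^r / r!` with `J^r` expanded in powers of `u`.
open Nat in
noncomputable def expansionTerm (μ : Measure ℝ) (α : ℝ → ℝ) (lam u : ℝ) (r n : ℕ) : ℝ :=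
  (-1) ^ r / r ! * ∫ s : Fin r → ℝ,
    lam ^ betaSum α s * gbinom (betaSum α s) n * (-u) ^ n ∂Measure.pi fun _ => μ

section Expansion

open Nat

variable {μ : Measure ℝ} {α : ℝ → ℝ} {lam u M : ℝ}

lemma expansionTerm_zero_succ (n : ℕ) : expansionTerm μ α lam u 0 (n + 1) = 0 := by
  simp [expansionTerm, betaSum, gbinom_zero_succ]

lemma expansionTerm_succ_succ (r n : ℕ) :
    expansionTerm μ α lam u (r + 1) (n + 1) = u ^ (n + 1) *
      ((-1) ^ ((n + 1) + (r + 1)) / (r + 1) ! * ∫ s : Fin (r + 1) → ℝ,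
        lam ^ betaSum α s * gbinom (betaSum α s) (n + 1) ∂Measure.pi fun _ => μ) := by
  rw [expansionTerm, integral_mul_const, neg_pow u, pow_add]
  ring

variable [SigmaFinite μ]

lemma hasSum_expansionTerm (hlam : 0 < lam) (hα : AEStronglyMeasurable α μ)
    (hαM : ∀ᵐ x ∂μ, |α x| ≤ M) (hint : Integrable (fun x => lam ^ α x) μ) (hu : |u| < 1)
    (r : ℕ) : HasSum (expansionTerm μ α lam u r)
      ((-∫ x, lam ^ α x * (1 - u) ^ α x ∂μ) ^ r / r !) := by
  have hu' : 0 < 1 - u := by linarith [le_abs_self u]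
  have h := (hasSum_integral_mul_gbinom_mul_pow (integrable_rpow_betaSum (r := r) hlam hint)
    (aestronglyMeasurable_betaSum hα) (ae_abs_betaSum_le hαM) (c := -u)
    (by rwa [abs_neg])).mul_left ((-1 : ℝ) ^ r / r !)
  have hJ : ∫ x, lam ^ α x * (1 - u) ^ α x ∂μ = ∫ x, (lam * (1 - u)) ^ α x ∂μ := by
    simp_rw [Real.mul_rpow hlam.le hu'.le]
  have hval : (-1) ^ r / r ! * ∫ s, lam ^ betaSum α s * (1 + -u) ^ betaSum α s
      ∂Measure.pi (fun _ : Fin r => μ) = (-∫ x, lam ^ α x * (1 - u) ^ α x ∂μ) ^ r / r ! := by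
    simp_rw [← sub_eq_add_neg, ← Real.mul_rpow hlam.le hu'.le]
    rw [integral_rpow_betaSum (mul_pos hlam hu'), ← hJ, neg_pow]
    ring
  rwa [hval] at h

lemma abs_expansionTerm_le (hlam : 0 < lam) (hαM : ∀ᵐ x ∂μ, |α x| ≤ M)
    (hint : Integrable (fun x => lam ^ α x) μ) (r n : ℕ) :
    |expansionTerm μ α lam u r n|
      ≤ (∫ x, lam ^ α x ∂μ) ^ r / r ! * ((-1) ^ n * gbinom (-(r * M)) n * |u| ^ n) := by
  have hw : ∫ s, |lam ^ betaSum α s| ∂Measure.pi (fun _ : Fin r => μ)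
      = (∫ x, lam ^ α x ∂μ) ^ r := by
    simp_rw [abs_of_pos (Real.rpow_pos_of_pos hlam _)]
    exact integral_rpow_betaSum hlam
  calc |expansionTerm μ α lam u r n|
      = |∫ s, lam ^ betaSum α s * gbinom (betaSum α s) n * (-u) ^ n
          ∂Measure.pi (fun _ : Fin r => μ)| / r ! := by
        rw [expansionTerm, abs_mul, abs_div, abs_pow, abs_neg, abs_one, one_pow, Nat.abs_cast,
          one_div_mul_eq_div]
    _ ≤ (∫ s, |lam ^ betaSum α s| ∂Measure.pi (fun _ : Fin r => μ))
          * ((-1) ^ n * gbinom (-(r * M)) n * |-u| ^ n) / r ! := by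
        gcongr
        exact abs_integral_mul_gbinom_mul_pow_le (integrable_rpow_betaSum hlam hint)
          (ae_abs_betaSum_le hαM) n
    _ = _ := by rw [hw, abs_neg]; ring

lemma summable_expansionTerm (hlam : 0 < lam) (hαM : ∀ᵐ x ∂μ, |α x| ≤ M)
    (hint : Integrable (fun x => lam ^ α x) μ) (hu : |u| < 1) :
    Summable (Function.uncurry (expansionTerm μ α lam u)) := by
  set L := ∫ x, lam ^ α x ∂μ
  set B : ℕ × ℕ → ℝ := fun p =>
    L ^ p.1 / p.1 ! * ((-1) ^ p.2 * gbinom (-(p.1 * M)) p.2 * |u| ^ p.2)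
  have hFB : ∀ p, |expansionTerm μ α lam u p.1 p.2| ≤ B p := fun p =>
    abs_expansionTerm_le hlam hαM hint p.1 p.2
  have hrow : ∀ r : ℕ, HasSum (fun n => B (r, n)) ((L * (1 - |u|) ^ (-M)) ^ r / r !) := by
    intro r
    have h := (hasSum_neg_one_pow_mul_gbinom_neg_mul_abs_pow (r * M) hu).mul_left (L ^ r / r !)
    have hval : L ^ r / r ! * (1 - |u|) ^ (-(r * M)) = (L * (1 - |u|) ^ (-M)) ^ r / r ! := by
      rw [neg_mul_eq_mul_neg, mul_comm (r : ℝ),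
        Real.rpow_mul_natCast (by linarith [le_abs_self u]), mul_pow]
      ring
    rwa [hval] at h
  have hB : Summable B := by
    refine (summable_prod_of_nonneg fun p => (abs_nonneg _).trans (hFB p)).2
      ⟨fun r => (hrow r).summable, ?_⟩
    simp_rw [fun r => (hrow r).tsum_eq]
    exact Real.summable_pow_div_factorial _
  exact hB.of_norm_bounded hFB

lemma expansionTerm_zero_right (hlam : 0 < lam) (r : ℕ) :
    expansionTerm μ α lam u r 0 = (-∫ x, lam ^ α x ∂μ) ^ r / r ! := by
  simp only [expansionTerm, gbinom_zero_right, pow_zero, mul_one]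
  rw [integral_rpow_betaSum hlam, neg_pow]
  ring

theorem exp_neg_integral_rpow_mul_rpow_eq (hlam : 0 < lam) (hα : AEStronglyMeasurable α μ)
    (hαM : ∀ᵐ x ∂μ, |α x| ≤ M) (hint : Integrable (fun x => lam ^ α x) μ) (hu : |u| < 1) :
    Real.exp (-∫ x, lam ^ α x * (1 - u) ^ α x ∂μ)
      = Real.exp (-∫ x, lam ^ α x ∂μ)
        + ∑' n : ℕ, u ^ (n + 1) *
            ∑' r : ℕ, ((-1 : ℝ) ^ ((n + 1) + (r + 1)) / (r + 1) !) *
              ∫ s : Fin (r + 1) → ℝ, lam ^ betaSum α s * gbinom (betaSum α s) (n + 1)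
                ∂Measure.pi fun _ => μ := by
  have hexp (x : ℝ) : HasSum (fun r => x ^ r / r !) (Real.exp x) := by
    rw [Real.exp_eq_exp_ℝ]
    exact NormedSpace.expSeries_div_hasSum_exp x
  have hF := summable_expansionTerm hlam hαM hint hu
  calc Real.exp (-∫ x, lam ^ α x * (1 - u) ^ α x ∂μ)
      = ∑' r, ∑' n, expansionTerm μ α lam u r n := by
        rw [← (hexp _).tsum_eq]
        exact tsum_congr fun r => (hasSum_expansionTerm hlam hα hαM hint hu r).tsum_eq.symm
    _ = ∑' n, ∑' r, expansionTerm μ α lam u r n := hF.tsum_comm.symm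
    _ = ∑' r, expansionTerm μ α lam u r 0 + ∑' n, ∑' r, expansionTerm μ α lam u r (n + 1) :=
        hF.prod_symm.prod.tsum_eq_zero_add
    _ = _ := by
      congr 1
      · rw [tsum_congr (expansionTerm_zero_right hlam), (hexp _).tsum_eq]
      · refine tsum_congr fun n => ?_
        have hcol : Summable fun r => expansionTerm μ α lam u r (n + 1) :=
          hF.prod_symm.prod_factor (n + 1)
        rw [hcol.tsum_eq_zero_add, expansionTerm_zero_succ, zero_add]
        simp_rw [expansionTerm_succ_succ]
        exact tsum_mul_left

end Expansion

theorem stmt_3 (α : ℝ → ℝ) (hα : ∀ s ∈ Set.Ici (0 : ℝ), α s ∈ Set.Ioo (0 : ℝ) 1)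
    (hαc : ContinuousOn α (Set.Ici 0)) (lam : ℝ) (hlam : 0 < lam)
    (τ t : ℝ) (hτ : 0 ≤ τ) (ht : 0 < t) (u : ℝ) (hu : u ∈ Set.Ico (0 : ℝ) 1) :
    Real.exp (-(∫ s in τ..(τ + t), lam ^ α s * (1 - u) ^ α s))
      = Real.exp (-(∫ s in τ..(τ + t), lam ^ α s))
        + ∑' n : ℕ, u ^ (n + 1) *
            ∑' r : ℕ, ((-1 : ℝ) ^ ((n + 1) + (r + 1)) / ((r + 1).factorial : ℝ)) *
              ∫ s : Fin (r + 1) → ℝ in Set.univ.pi (fun _ => Set.Icc τ (τ + t)),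
                lam ^ betaSum α s * gbinom (betaSum α s) (n + 1) := by
  set T := Set.Icc τ (τ + t)
  have hT (f : ℝ → ℝ) : ∫ s in τ..τ + t, f s = ∫ s in T, f s := by
    rw [intervalIntegral.integral_of_le (by linarith), integral_Icc_eq_integral_Ioc]
  have hcube (r : ℕ) : (volume : Measure (Fin r → ℝ)).restrict (Set.univ.pi fun _ => T)
      = Measure.pi fun _ => volume.restrict T := Measure.restrict_pi_pi _ _
  have hαT : ContinuousOn α T := hαc.mono fun x hx => hτ.trans hx.1
  have hαT_bound : ∀ x ∈ T, |α x| ≤ 1 := fun x hx =>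
    have h := hα x (hτ.trans hx.1)
    abs_le.2 ⟨by linarith [h.1], h.2.le⟩
  simp only [hT, hcube]
  exact exp_neg_integral_rpow_mul_rpow_eq hlam (hαT.aestronglyMeasurable measurableSet_Icc)
    (ae_restrict_of_forall_mem measurableSet_Icc hαT_bound)
    ((continuousOn_const.rpow hαT fun _ _ => Or.inl hlam.ne').integrableOn_compact isCompact_Icc)
    (by rw [abs_of_nonneg hu.1]; exact hu.2)
end

section
/- Let α : [0,∞) → (0,1) be continuous, let t > 0, let n ≥ 1 be an integer, and let λ > 0. Then ∑_{r=1}^∞ ((−1)^{n+r}/r!) ∫_{[0,t]^r} λ^{β_r(s₁,…,s_r)} binom(β_r(s₁,…,s_r), n) ds₁⋯ds_r = ((−λ)^n / n!) · (d^n/dλ^n) exp(−∫_0^t λ^{α(τ)} dτ), where the n-th derivative is taken with respect to λ at the point λ. -/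
/-!
Write `I(l) = ∫₀ᵗ l ^ α(τ) dτ`. Then `exp (-I(l)) = ∑ₖ (-1)ᵏ / k! · I(l)ᵏ`, and by Fubini `I(l)ᵏ` is the
integral of `l ^ β_k(s)` over the cube `[0,t]ᵏ`. Since `d/dl (P_m(β) l ^ (β - m)) = P_{m+1}(β) l ^ (β - m - 1)`
for the descending Pochhammer polynomials `P_m`, the series can be differentiated `n` times term by term:
near `l`, the `m`-th derivative of the `k`-th term is `O(cᵏ tᵏ / k!)` because `|β_k| ≤ k · sup |α|`.
Finally `(-l)ⁿ / n! · P_n(β) l ^ (β - n) = (-1)ⁿ l ^ β binom(β, n)`, and the term `k = 0` drops out since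
`binom(0, n) = 0` for `n ≥ 1`.
-/

open MeasureTheory

open Set Filter Topology Real

lemma gbinom_eq_descPochhammer_eval (x : ℝ) (n : ℕ) :
    gbinom x n = (descPochhammer ℝ n).eval x / n.factorial := by
  rw [gbinom, descPochhammer_eval_eq_prod_range]

lemma abs_descPochhammer_eval_le (x : ℝ) (m : ℕ) :
    |(descPochhammer ℝ m).eval x| ≤ (|x| + m) ^ m := by
  rw [descPochhammer_eval_eq_prod_range, Finset.abs_prod]
  calc ∏ j ∈ Finset.range m, |x - j| ≤ ∏ _j ∈ Finset.range m, (|x| + m) := by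
        refine Finset.prod_le_prod (fun _ _ => abs_nonneg _) fun j hj => ?_
        have hjm : (j : ℝ) ≤ m := by exact_mod_cast (Finset.mem_range.1 hj).le
        calc |x - j| ≤ |x| + |(j : ℝ)| := abs_sub _ _
          _ ≤ |x| + m := by rw [Nat.abs_cast]; linarith
    _ = (|x| + m) ^ m := by simp

lemma abs_descPochhammer_eval_mul_rpow_le (m : ℕ) (x : ℝ) {y : ℝ} (hy : 0 < y) :
    |(descPochhammer ℝ m).eval x * y ^ (x - m)| ≤
      m.factorial * exp ((|x| + m) * (1 + |log y|)) := by
  have hpoly : |(descPochhammer ℝ m).eval x| ≤ m.factorial * exp (|x| + m) := by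
    have h := Real.pow_div_factorial_le_exp (|x| + m) (by positivity) m
    rw [div_le_iff₀ (by positivity)] at h
    linarith [abs_descPochhammer_eval_le x m]
  have hpow : y ^ (x - m) ≤ exp ((|x| + m) * |log y|) := by
    rw [rpow_def_of_pos hy, exp_le_exp]
    calc log y * (x - m) ≤ |x - m| * |log y| := by
          rw [mul_comm, ← abs_mul]; exact le_abs_self _
      _ ≤ (|x| + m) * |log y| := by
          gcongr
          calc |x - m| ≤ |x| + |(m : ℝ)| := abs_sub _ _
            _ = |x| + m := by rw [Nat.abs_cast]
  rw [abs_mul, abs_of_pos (rpow_pos_of_pos hy _), mul_add, mul_one, exp_add, ← mul_assoc]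
  exact mul_le_mul hpoly hpow (by positivity) (by positivity)

lemma abs_descPochhammer_eval_mul_rpow_le_of_abs_le (m : ℕ) {x y E L : ℝ} (hx : |x| ≤ E)
    (hy : 0 < y) (hL : |log y| ≤ L) :
    |(descPochhammer ℝ m).eval x * y ^ (x - m)| ≤ m.factorial * exp ((E + m) * (1 + L)) := by
  refine (abs_descPochhammer_eval_mul_rpow_le m x hy).trans ?_
  have hE : 0 ≤ E + m := by linarith [abs_nonneg x, (m.cast_nonneg : (0 : ℝ) ≤ m)]
  gcongr

lemma abs_log_le_of_mem_Ioo {l y : ℝ} (hl : 0 < l) (hy : y ∈ Ioo (l / 2) (2 * l)) :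
    |log y| ≤ |log l| + 1 := by
  have hlo : log (l / 2) < log y := log_lt_log (by positivity) hy.1
  have hhi : log y < log (2 * l) := log_lt_log (by linarith [hy.1]) hy.2
  rw [log_div hl.ne' two_ne_zero] at hlo
  rw [log_mul two_ne_zero hl.ne'] at hhi
  rw [abs_le]
  constructor <;> linarith [neg_abs_le (log l), le_abs_self (log l), log_two_lt_d9]

lemma iteratedDeriv_eqOn_of_hasDerivAt {𝕜 F : Type*} [NontriviallyNormedField 𝕜]
    [NormedAddCommGroup F] [NormedSpace 𝕜 F] {U : Set 𝕜} (hU : IsOpen U) {f : 𝕜 → F}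
    {g : ℕ → 𝕜 → F} (hf : EqOn f (g 0) U) (hg : ∀ m, ∀ y ∈ U, HasDerivAt (g m) (g (m + 1) y) y)
    (m : ℕ) : EqOn (iteratedDeriv m f) (g m) U := by
  induction m with
  | zero => simpa only [iteratedDeriv_zero] using hf
  | succ m ih =>
    intro y hy
    rw [iteratedDeriv_succ, (eventuallyEq_of_mem (hU.mem_nhds hy) ih).deriv_eq]
    exact (hg m y hy).deriv

section ParametricIntegral

variable {X : Type*} [MeasurableSpace X] {μ : Measure X} {f : X → ℝ} {E : ℝ}

lemma aestronglyMeasurable_descPochhammer_eval_mul_rpow (hf : AEStronglyMeasurable f μ)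
    (m : ℕ) (y : ℝ) :
    AEStronglyMeasurable (fun x => (descPochhammer ℝ m).eval (f x) * y ^ (f x - m)) μ :=
  ((by fun_prop : Measurable fun b : ℝ => (descPochhammer ℝ m).eval b * y ^ (b - m)).comp_aemeasurable
    hf.aemeasurable).aestronglyMeasurable

variable [IsFiniteMeasure μ]

lemma abs_integral_descPochhammer_eval_mul_rpow_le (hfE : ∀ᵐ x ∂μ, |f x| ≤ E) (m : ℕ)
    {y L : ℝ} (hy : 0 < y) (hL : |log y| ≤ L) :
    |∫ x, (descPochhammer ℝ m).eval (f x) * y ^ (f x - m) ∂μ| ≤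
      m.factorial * exp ((E + m) * (1 + L)) * μ.real univ := by
  rw [← Real.norm_eq_abs]
  refine norm_integral_le_of_norm_le_const ?_
  filter_upwards [hfE] with x hx
  exact abs_descPochhammer_eval_mul_rpow_le_of_abs_le m hx hy hL

lemma hasDerivAt_integral_descPochhammer_eval_mul_rpow (hf : AEStronglyMeasurable f μ)
    (hfE : ∀ᵐ x ∂μ, |f x| ≤ E) (m : ℕ) {l : ℝ} (hl : 0 < l) :
    HasDerivAt (fun y => ∫ x, (descPochhammer ℝ m).eval (f x) * y ^ (f x - m) ∂μ)
      (∫ x, (descPochhammer ℝ (m + 1)).eval (f x) * l ^ (f x - (m + 1 : ℕ)) ∂μ) l := by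
  have hU : Ioo (l / 2) (2 * l) ∈ 𝓝 l := Ioo_mem_nhds (by linarith) (by linarith)
  have hpos : ∀ y ∈ Ioo (l / 2) (2 * l), 0 < y := fun y hy => by linarith [hy.1]
  refine (hasDerivAt_integral_of_dominated_loc_of_deriv_le
    (F' := fun y x => (descPochhammer ℝ (m + 1)).eval (f x) * y ^ (f x - (m + 1 : ℕ))) hU
    (Eventually.of_forall fun y => aestronglyMeasurable_descPochhammer_eval_mul_rpow hf m y)
    ?_ (aestronglyMeasurable_descPochhammer_eval_mul_rpow hf (m + 1) l) ?_
    (integrable_const ((m + 1).factorial * exp ((E + (m + 1 : ℕ)) * (1 + (|log l| + 1))))) ?_).2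
  · exact .of_bound (aestronglyMeasurable_descPochhammer_eval_mul_rpow hf m l) _
      (hfE.mono fun x hx => abs_descPochhammer_eval_mul_rpow_le_of_abs_le m hx hl le_rfl)
  · filter_upwards [hfE] with x hx y hy
    exact abs_descPochhammer_eval_mul_rpow_le_of_abs_le (m + 1) hx (hpos y hy)
      (abs_log_le_of_mem_Ioo hl hy)
  · refine Eventually.of_forall fun x y hy => ?_
    have h := ((hasDerivAt_rpow_const (p := f x - m) (Or.inl (hpos y hy).ne')).const_mul
      ((descPochhammer ℝ m).eval (f x)))
    refine h.congr_deriv ?_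
    rw [descPochhammer_succ_eval, Nat.cast_succ, sub_add_eq_sub_sub]
    ring

end ParametricIntegral

def cube (t : ℝ) (k : ℕ) : Set (Fin k → ℝ) := univ.pi fun _ => Icc 0 t

lemma measurableSet_cube (t : ℝ) (k : ℕ) : MeasurableSet (cube t k) :=
  .univ_pi fun _ => measurableSet_Icc

lemma measureReal_cube {t : ℝ} (ht : 0 ≤ t) (k : ℕ) : volume.real (cube t k) = t ^ k := by
  rw [measureReal_def, cube, volume_pi_pi]
  simp [ht]

instance (t : ℝ) (k : ℕ) : IsFiniteMeasure (volume.restrict (cube t k)) :=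
  isFiniteMeasure_restrict.2 (isCompact_univ_pi fun _ => isCompact_Icc).measure_lt_top.ne

lemma setIntegral_cube_rpow_betaSum (α : ℝ → ℝ) (t : ℝ) (k : ℕ) {l : ℝ} (hl : 0 < l) :
    ∫ s in cube t k, l ^ betaSum α s = (∫ τ in Icc 0 t, l ^ α τ) ^ k := by
  simp only [cube, betaSum, rpow_sum_of_pos hl, volume_pi, Measure.restrict_pi_pi]
  rw [integral_fintype_prod_eq_pow (ι := Fin k) (fun τ => l ^ α τ), Fintype.card_fin]

variable {α : ℝ → ℝ} {t : ℝ}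

lemma aestronglyMeasurable_betaSum_s10 (hα : ContinuousOn α (Icc 0 t)) (k : ℕ) :
    AEStronglyMeasurable (betaSum α) (volume.restrict (cube t k)) := by
  refine ContinuousOn.aestronglyMeasurable ?_ (measurableSet_cube t k)
  exact continuousOn_finsetSum _ fun j _ =>
    hα.comp (continuous_apply j).continuousOn fun s hs => hs j trivial

lemma ae_abs_betaSum_le_s10 {A : ℝ} (hA : ∀ τ ∈ Icc 0 t, |α τ| ≤ A) (k : ℕ) :
    ∀ᵐ s ∂volume.restrict (cube t k), |betaSum α s| ≤ k * A := by
  filter_upwards [ae_restrict_mem (measurableSet_cube t k)] with s hs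
  calc |betaSum α s| ≤ ∑ j, |α (s j)| := Finset.abs_sum_le_sum_abs _ _
    _ ≤ ∑ _j : Fin k, A := Finset.sum_le_sum fun j _ => hA _ (hs j trivial)
    _ = k * A := by simp

/-- The `m`-th `l`-derivative, taken term by term, of `∑ₖ (-1)ᵏ / k! ∫_{[0,t]ᵏ} l ^ β_k(s) ds`. -/
noncomputable def expIntegralDerivSeries (α : ℝ → ℝ) (t : ℝ) (m : ℕ) (l : ℝ) : ℝ :=
  ∑' k : ℕ, (-1) ^ k / k.factorial *
    ∫ s in cube t k, (descPochhammer ℝ m).eval (betaSum α s) * l ^ (betaSum α s - m)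

lemma exp_neg_integral_eq_expIntegralDerivSeries_zero (ht : 0 ≤ t) {l : ℝ} (hl : 0 < l) :
    exp (-∫ τ in (0 : ℝ)..t, l ^ α τ) = expIntegralDerivSeries α t 0 l := by
  rw [Real.exp_eq_exp_ℝ, NormedSpace.exp_eq_tsum_div, expIntegralDerivSeries]
  refine tsum_congr fun k => ?_
  simp only [descPochhammer_zero, Polynomial.eval_one, one_mul, Nat.cast_zero, sub_zero]
  rw [setIntegral_cube_rpow_betaSum α t k hl, intervalIntegral.integral_of_le ht,
    integral_Icc_eq_integral_Ioc, neg_pow, div_mul_eq_mul_div]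

lemma abs_expIntegralDerivSeries_term_le (ht : 0 ≤ t) {A : ℝ}
    (hA : ∀ τ ∈ Icc 0 t, |α τ| ≤ A) (m k : ℕ) {y L : ℝ} (hy : 0 < y) (hL : |log y| ≤ L) :
    |(-1) ^ k / k.factorial *
        ∫ s in cube t k, (descPochhammer ℝ m).eval (betaSum α s) * y ^ (betaSum α s - m)| ≤
      m.factorial * exp (m * (1 + L)) * ((exp (A * (1 + L)) * t) ^ k / k.factorial) := by
  have hint := abs_integral_descPochhammer_eval_mul_rpow_le (ae_abs_betaSum_le_s10 hA k) m hy hL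
  rw [measureReal_restrict_apply_univ, measureReal_cube ht] at hint
  have hexp : exp ((k * A + m) * (1 + L)) = exp (m * (1 + L)) * exp (A * (1 + L)) ^ k := by
    rw [← exp_nat_mul, ← exp_add]; ring_nf
  rw [abs_mul, abs_div, abs_pow, abs_neg, abs_one, one_pow, Nat.abs_cast]
  calc _ ≤ 1 / k.factorial * (m.factorial * exp ((k * A + m) * (1 + L)) * t ^ k) := by gcongr
    _ = _ := by rw [hexp]; ring

lemma hasDerivAt_expIntegralDerivSeries (hα : ContinuousOn α (Icc 0 t)) (ht : 0 ≤ t) (m : ℕ)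
    {l : ℝ} (hl : 0 < l) :
    HasDerivAt (expIntegralDerivSeries α t m) (expIntegralDerivSeries α t (m + 1) l) l := by
  obtain ⟨A, hA⟩ := isCompact_Icc.exists_bound_of_continuousOn hα
  set L := |log l| + 1
  have hlU : l ∈ Ioo (l / 2) (2 * l) := ⟨by linarith, by linarith⟩
  have hpos : ∀ y ∈ Ioo (l / 2) (2 * l), 0 < y := fun y hy => by linarith [hy.1]
  have hsum : ∀ j : ℕ, Summable fun k : ℕ =>
      j.factorial * exp (j * (1 + L)) * ((exp (A * (1 + L)) * t) ^ k / k.factorial) :=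
    fun j => (Real.summable_pow_div_factorial _).mul_left _
  refine hasDerivAt_tsum_of_isPreconnected (hsum (m + 1)) isOpen_Ioo isPreconnected_Ioo
    (fun k y hy => ((hasDerivAt_integral_descPochhammer_eval_mul_rpow
      (aestronglyMeasurable_betaSum_s10 hα k) (ae_abs_betaSum_le_s10 hA k) m (hpos y hy)).const_mul _))
    (fun k y hy => abs_expIntegralDerivSeries_term_le ht hA (m + 1) k (hpos y hy)
      (abs_log_le_of_mem_Ioo hl hy))
    hlU (.of_norm_bounded (hsum m) fun k => abs_expIntegralDerivSeries_term_le ht hA m k hl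
      (abs_log_le_of_mem_Ioo hl hlU)) hlU

lemma rpow_mul_gbinom {l : ℝ} (hl : 0 < l) (x : ℝ) (n : ℕ) :
    l ^ x * gbinom x n = l ^ n / n.factorial * ((descPochhammer ℝ n).eval x * l ^ (x - n)) := by
  rw [gbinom_eq_descPochhammer_eval, rpow_sub_natCast hl.ne']
  field_simp

theorem stmt_10_general (α : ℝ → ℝ) (hαc : ContinuousOn α (Set.Ici 0)) (t : ℝ) (ht : 0 < t)
    (n : ℕ) (hn : 1 ≤ n) (lam : ℝ) (hlam : 0 < lam) :
    ∑' r : ℕ, ((-1 : ℝ) ^ (n + (r + 1)) / ((r + 1).factorial : ℝ)) *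
        ∫ s : Fin (r + 1) → ℝ in Set.univ.pi (fun _ => Set.Icc (0 : ℝ) t),
          lam ^ betaSum α s * gbinom (betaSum α s) n
      = ((-lam) ^ n / (n.factorial : ℝ)) *
          iteratedDeriv n (fun l : ℝ => Real.exp (-(∫ τ in (0 : ℝ)..t, l ^ α τ))) lam := by
  have hα : ContinuousOn α (Icc 0 t) := hαc.mono Icc_subset_Ici_self
  rw [iteratedDeriv_eqOn_of_hasDerivAt isOpen_Ioi
    (fun l hl => exp_neg_integral_eq_expIntegralDerivSeries_zero ht.le hl)
    (fun m l hl => hasDerivAt_expIntegralDerivSeries hα ht.le m hl) n hlam,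
    expIntegralDerivSeries, ← tsum_mul_left]
  have hterm : ∀ r : ℕ, (-1 : ℝ) ^ (n + (r + 1)) / (r + 1).factorial *
        ∫ s in cube t (r + 1), lam ^ betaSum α s * gbinom (betaSum α s) n =
      (-lam) ^ n / n.factorial * ((-1) ^ (r + 1) / (r + 1).factorial * ∫ s in cube t (r + 1),
        (descPochhammer ℝ n).eval (betaSum α s) * lam ^ (betaSum α s - n)) := by
    intro r
    simp only [rpow_mul_gbinom hlam, integral_const_mul, neg_pow lam, pow_add]
    ring
  have hsupport : (Function.support fun k : ℕ => (-lam) ^ n / n.factorial *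
      ((-1) ^ k / k.factorial * ∫ s in cube t k,
        (descPochhammer ℝ n).eval (betaSum α s) * lam ^ (betaSum α s - n))) ⊆ range Nat.succ := by
    rintro (_ | k) hk
    · simp [betaSum, descPochhammer_ne_zero_eval_zero, Nat.one_le_iff_ne_zero.1 hn] at hk
    · exact ⟨k, rfl⟩
  exact (tsum_congr hterm).trans (Nat.succ_injective.tsum_eq hsupport)

theorem stmt_10 (α : ℝ → ℝ) (hα : ∀ s ∈ Set.Ici (0 : ℝ), α s ∈ Set.Ioo (0 : ℝ) 1)
    (hαc : ContinuousOn α (Set.Ici 0)) (t : ℝ) (ht : 0 < t)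
    (n : ℕ) (hn : 1 ≤ n) (lam : ℝ) (hlam : 0 < lam) :
    ∑' r : ℕ, ((-1 : ℝ) ^ (n + (r + 1)) / ((r + 1).factorial : ℝ)) *
        ∫ s : Fin (r + 1) → ℝ in Set.univ.pi (fun _ => Set.Icc (0 : ℝ) t),
          lam ^ betaSum α s * gbinom (betaSum α s) n
      = ((-lam) ^ n / (n.factorial : ℝ)) *
          iteratedDeriv n (fun l : ℝ => Real.exp (-(∫ τ in (0 : ℝ)..t, l ^ α τ))) lam :=
  stmt_10_general α hαc t ht n hn lam hlam
end
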